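/- Let G be a C_{≥t}-free graph (t ≥ 4 even) with no K_{ℓ,ℓ} subgraph. Let X be a set of at least q·t/2 vertices with G[X] q-colorable, and Y an independent set disjoint from X with |Y| ≥ ℓ·|X|^{qt/2}. Then there exist X' ⊆ X and Y' ⊆ Y with |X'| > |X| − ℓ and |Y'| ≥ |Y| / |X|^{qt/2} such that no vertex of X' is adjacent to any vertex of Y'. -/

import Mathlib

/-- `G` contains `K_{ℓ,ℓ}` as a (not necessarily induced) subgraph. -/
def ContainsKll {V : Type*} (G : SimpleGraph V) (ℓ : ℕ) : Prop :=
  ∃ A B : Finset V, Disjoint A B ∧ A.card = ℓ ∧ B.card = ℓ ∧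
    ∀ a ∈ A, ∀ b ∈ B, G.Adj a b

/-- `G` contains an induced copy of `H`. -/
def HasInducedCopy {W V : Type*} (H : SimpleGraph W) (G : SimpleGraph V) : Prop :=
  ∃ f : W ↪ V, ∀ a b : W, G.Adj (f a) (f b) ↔ H.Adj a b

/-- `G` is `C_{≥t}`-free: it has no induced cycle with at least `t` vertices. -/
def CgeFree {V : Type*} (t : ℕ) (G : SimpleGraph V) : Prop :=
  ∀ n : ℕ, t ≤ n → ¬ HasInducedCopy (SimpleGraph.cycleGraph n) G

/-!
The traces `N(y) ∩ X`, `y ∈ Y`, form a set family on `X` of VC-dimension at most `q ⌊t/2⌋`: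
a shattered set of larger size contains `m = ⌊t/2⌋ + 1 ≥ 3` vertices `z₀, …, z_{m-1}` of one
colour, and vertices `yᵢ ∈ Y` whose traces on them are exactly `{zᵢ, zᵢ₊₁}` (indices mod `m`)
close up an induced cycle `z₀ y₀ z₁ y₁ … z_{m-1} y_{m-1}` of length `2m ≥ t`.
By the Sauer–Shelah lemma there are at most `|X| ^ (qt/2)` traces, so some trace `A` is shared
by a set `Y' ⊆ Y` with `|Y| ≤ |Y'| |X| ^ (qt/2)`, in particular `|Y'| ≥ ℓ`. Then `A ∩ X` and `Y'`
span a complete bipartite graph, so `|A ∩ X| < ℓ`, and `X' = X \ A` works.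
-/

open Finset SimpleGraph Function

lemma Nat.add_one_mod_eq_ite {a n : ℕ} (ha : a < n) :
    (a + 1) % n = if a + 1 = n then 0 else a + 1 := by
  split_ifs with h
  · simp [h]
  · exact Nat.mod_eq_of_lt (by omega)

lemma Nat.two_mul_choose_le_pow {k : ℕ} (hk : 2 ≤ k) (n : ℕ) : 2 * n.choose k ≤ n ^ k :=
  calc 2 * n.choose k ≤ k.factorial * n.choose k :=
        Nat.mul_le_mul_right _ (Nat.factorial_le (m := 2) hk)
    _ = n.descFactorial k := (Nat.descFactorial_eq_factorial_mul_choose n k).symm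
    _ ≤ n ^ k := Nat.descFactorial_le_pow n k

lemma Nat.sum_choose_le_pow {n d : ℕ} (hn : 2 ≤ n) (hd : 2 ≤ d) :
    ∑ k ∈ Iic d, n.choose k ≤ n ^ d := by
  induction d, hd using Nat.le_induction with
  | base =>
    have h₂ : 2 * n.choose 2 = n * (n - 1) := by
      rw [Nat.choose_two_right, Nat.mul_div_cancel' (Nat.even_mul_pred_self n).two_dvd]
    obtain ⟨k, rfl⟩ : ∃ k, n = k + 1 := ⟨n - 1, by omega⟩
    rw [Nat.add_sub_cancel] at h₂
    simp only [← Nat.range_succ_eq_Iic, sum_range_succ, range_zero, sum_empty,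
      Nat.choose_zero_right, Nat.choose_one_right]
    nlinarith
  | succ d hd ih =>
    rw [← Nat.range_succ_eq_Iic, sum_range_succ, Nat.range_succ_eq_Iic]
    have := Nat.two_mul_choose_le_pow (k := d + 1) (by omega) n
    have : 2 * n ^ d ≤ n ^ (d + 1) := by rw [pow_succ']; exact Nat.mul_le_mul_right _ hn
    omega

lemma Finset.exists_card_le_card_fiber_mul_card_image {α β : Type*} [DecidableEq β] [Nonempty β]
    (f : α → β) (s : Finset α) : ∃ b, #s ≤ #{a ∈ s | f a = b} * #(s.image f) := by
  rcases s.eq_empty_or_nonempty with rfl | hs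
  · exact ⟨Classical.arbitrary β, by simp⟩
  · obtain ⟨b, -, hb⟩ := exists_max_image (s.image f) (fun b => #{a ∈ s | f a = b})
      (hs.image f)
    exact ⟨b, card_le_mul_card_image_of_maps_to (fun a ha => mem_image_of_mem f ha) _ hb⟩

section Shatters

variable {α : Type*} [DecidableEq α] {𝒜 : Finset (Finset α)} {X : Finset α}

lemma Finset.Shatters.subset_of_forall_subset {S : Finset α} (hS : 𝒜.Shatters S)
    (h𝒜 : ∀ A ∈ 𝒜, A ⊆ X) : S ⊆ X := by
  obtain ⟨A, hA, hSA⟩ := hS.exists_superset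
  exact hSA.trans (h𝒜 A hA)

lemma Finset.card_le_sum_choose_vcDim (h𝒜 : ∀ A ∈ 𝒜, A ⊆ X) :
    #𝒜 ≤ ∑ k ∈ Iic 𝒜.vcDim, (#X).choose k := by
  refine (card_le_card_shatterer 𝒜).trans ?_
  simp_rw [← card_powersetCard]
  refine (card_le_card fun S hS => mem_biUnion.2 ⟨#S, ?_⟩).trans card_biUnion_le
  have hS := mem_shatterer.1 hS
  exact ⟨mem_Iic.2 hS.card_le_vcDim, mem_powersetCard.2 ⟨hS.subset_of_forall_subset h𝒜, rfl⟩⟩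

end Shatters

lemma SimpleGraph.cycleGraph_adj_iff_val {n : ℕ} (hn : 2 ≤ n) {a b : Fin n} :
    (cycleGraph n).Adj a b ↔ a.val + 1 = b.val ∨ b.val + 1 = a.val ∨
      (a.val = 0 ∧ b.val + 1 = n) ∨ (b.val = 0 ∧ a.val + 1 = n) := by
  obtain ⟨n, rfl⟩ := Nat.exists_eq_add_of_le' hn
  rw [cycleGraph_adj, sub_eq_iff_eq_add, sub_eq_iff_eq_add, Fin.ext_iff, Fin.ext_iff,
    Fin.val_add, Fin.val_add, Fin.val_one, Nat.add_comm 1, Nat.add_comm 1,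
    Nat.add_one_mod_eq_ite a.isLt, Nat.add_one_mod_eq_ite b.isLt]
  split_ifs <;> omega

section Graph

variable {V : Type*} (G : SimpleGraph V)

lemma hasInducedCopy_cycleGraph_of_interleaved {m : ℕ} (hm : 3 ≤ m) (Z y : Fin m → V)
    (hZ : Injective Z) (hZZ : ∀ i j, ¬ G.Adj (Z i) (Z j)) (hyy : ∀ i j, ¬ G.Adj (y i) (y j))
    (hyZ : ∀ i j, G.Adj (y i) (Z j) ↔ j.val = i.val ∨ j.val = (i.val + 1) % m) :
    HasInducedCopy (cycleGraph (2 * m)) G := by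
  have hyZ' : ∀ i j, G.Adj (y i) (Z j) ↔
      j.val = i.val ∨ j.val = i.val + 1 ∨ (j.val = 0 ∧ i.val + 1 = m) := by
    intro i j
    rw [hyZ, Nat.add_one_mod_eq_ite i.isLt]
    split_ifs <;> omega
  -- `y i = y i'` would see `Z i` and `Z i'`, forcing `i' = i + 1` and `i = i' + 1` mod `m`
  have hy : Injective y := by
    intro i i' h
    have h₁ := (hyZ' i' i).1 (h ▸ (hyZ' i i).2 (Or.inl rfl))
    have h₂ := (hyZ' i i').1 (h ▸ (hyZ' i' i').2 (Or.inl rfl))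
    exact Fin.ext (by omega)
  have hZy : ∀ i j, Z i ≠ y j := fun i j h =>
    hZZ i j (by rw [h]; exact (hyZ' j j).2 (Or.inl rfl))
  let f : Fin (2 * m) → V := fun k =>
    if k.val % 2 = 0 then Z ⟨k.val / 2, by omega⟩ else y ⟨k.val / 2, by omega⟩
  refine ⟨⟨f, fun a b hab => ?_⟩, fun a b => ?_⟩
  · simp only [f] at hab
    split_ifs at hab
    · have := congrArg Fin.val (hZ hab); simp only at this; exact Fin.ext (by omega)
    · exact absurd hab (hZy _ _)
    · exact absurd hab.symm (hZy _ _)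
    · have := congrArg Fin.val (hy hab); simp only at this; exact Fin.ext (by omega)
  · change G.Adj (f a) (f b) ↔ _
    rw [cycleGraph_adj_iff_val (by omega)]
    simp only [f]
    split_ifs
    · simp only [hZZ, false_iff]; omega
    · rw [G.adj_comm, hyZ']; simp only; omega
    · rw [hyZ']; simp only; omega
    · simp only [hyy, false_iff]; omega

section Traces

variable [DecidableEq V] [DecidableRel G.Adj]

def neighborTraces (X Y : Finset V) : Finset (Finset V) :=
  Y.image fun y => {x ∈ X | G.Adj y x}

variable {G} {X Y : Finset V}

lemma subset_of_mem_neighborTraces {A : Finset V} (hA : A ∈ neighborTraces G X Y) : A ⊆ X := by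
  obtain ⟨y, -, rfl⟩ := mem_image.1 hA
  exact filter_subset _ _

lemma hasInducedCopy_cycleGraph_of_shatters_neighborTraces {S : Finset V}
    (hYind : ∀ u ∈ Y, ∀ v ∈ Y, ¬ G.Adj u v) (hSind : ∀ u ∈ S, ∀ v ∈ S, ¬ G.Adj u v)
    (hS : 3 ≤ #S) (hsh : (neighborTraces G X Y).Shatters S) :
    HasInducedCopy (cycleGraph (2 * #S)) G := by
  have hSX := hsh.subset_of_forall_subset fun _ => subset_of_mem_neighborTraces
  let e := S.equivFinOfCardEq rfl
  let Z : Fin #S → V := fun i => e.symm i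
  have hZS : ∀ i, Z i ∈ S := fun i => (e.symm i).2
  have hZ : Injective Z := Subtype.val_injective.comp e.symm.injective
  let next : Fin #S → Fin #S := fun i => ⟨(i.val + 1) % #S, Nat.mod_lt _ (by omega)⟩
  have hy : ∀ i, ∃ y ∈ Y, S ∩ {x ∈ X | G.Adj y x} = {Z i, Z (next i)} := by
    intro i
    obtain ⟨A, hA, hSA⟩ := hsh (insert_subset (hZS i) (singleton_subset_iff.2 (hZS _)))
    obtain ⟨y, hy, rfl⟩ := mem_image.1 hA
    exact ⟨y, hy, hSA⟩
  choose y hyY hyS using hy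
  refine hasInducedCopy_cycleGraph_of_interleaved G hS Z y hZ
    (fun i j => hSind _ (hZS i) _ (hZS j)) (fun i j => hYind _ (hyY i) _ (hyY j)) fun i j => ?_
  have : G.Adj (y i) (Z j) ↔ Z j ∈ S ∩ {x ∈ X | G.Adj (y i) x} := by
    simp [hZS j, hSX (hZS j)]
  rw [this, hyS, mem_insert, mem_singleton, hZ.eq_iff, hZ.eq_iff, Fin.ext_iff, Fin.ext_iff]

lemma vcDim_neighborTraces_le {t q : ℕ} (ht : 4 ≤ t) (hG : CgeFree t G) (c : V → Fin q)
    (hc : ∀ u ∈ X, ∀ v ∈ X, G.Adj u v → c u ≠ c v) (hYind : ∀ u ∈ Y, ∀ v ∈ Y, ¬ G.Adj u v) :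
    (neighborTraces G X Y).vcDim ≤ q * (t / 2) := by
  refine Finset.sup_le fun S hS => ?_
  have hsh := mem_shatterer.1 hS
  have hSX := hsh.subset_of_forall_subset fun _ => subset_of_mem_neighborTraces
  by_contra! hbig
  obtain ⟨j, -, hj⟩ := exists_lt_card_fiber_of_mul_lt_card_of_maps_to (f := c)
    (fun _ _ => mem_univ _) (by simpa using hbig)
  obtain ⟨S', hS'j, hS'card⟩ :=
    exists_subset_card_eq (show t / 2 + 1 ≤ #{x ∈ S | c x = j} by omega)
  have hS'S : S' ⊆ S := hS'j.trans (filter_subset _ _)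
  have hS'ind : ∀ u ∈ S', ∀ v ∈ S', ¬ G.Adj u v := fun u hu v hv huv =>
    hc u (hSX (hS'S hu)) v (hSX (hS'S hv)) huv
      (by rw [(mem_filter.1 (hS'j hu)).2, (mem_filter.1 (hS'j hv)).2])
  exact hG _ (by omega) (hasInducedCopy_cycleGraph_of_shatters_neighborTraces hYind hS'ind
    (by omega) (hsh.mono_right hS'S))

lemma card_neighborTraces_le {t q : ℕ} (ht : 4 ≤ t) (hq : 1 ≤ q) (hX : q * t / 2 ≤ #X)
    (hG : CgeFree t G) (c : V → Fin q) (hc : ∀ u ∈ X, ∀ v ∈ X, G.Adj u v → c u ≠ c v)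
    (hYind : ∀ u ∈ Y, ∀ v ∈ Y, ¬ G.Adj u v) :
    #(neighborTraces G X Y) ≤ #X ^ (q * t / 2) := by
  have hd : 2 ≤ q * (t / 2) := le_trans (by omega) (Nat.mul_le_mul hq (Nat.div_le_div_right ht))
  have hdM : q * (t / 2) ≤ q * t / 2 := Nat.mul_div_le_mul_div_assoc q t 2
  calc #(neighborTraces G X Y)
      ≤ ∑ k ∈ Iic (neighborTraces G X Y).vcDim, (#X).choose k :=
        card_le_sum_choose_vcDim fun _ => subset_of_mem_neighborTraces
    _ ≤ ∑ k ∈ Iic (q * (t / 2)), (#X).choose k :=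
        sum_le_sum_of_subset (Iic_subset_Iic.2 (vcDim_neighborTraces_le ht hG c hc hYind))
    _ ≤ #X ^ (q * (t / 2)) := Nat.sum_choose_le_pow (by omega) hd
    _ ≤ #X ^ (q * t / 2) := Nat.pow_le_pow_right (by omega) hdM

end Traces

lemma card_lt_of_forall_adj_of_not_containsKll {ℓ : ℕ} (hK : ¬ ContainsKll G ℓ)
    {A B : Finset V} (hAB : Disjoint A B) (hadj : ∀ a ∈ A, ∀ b ∈ B, G.Adj a b) (hB : ℓ ≤ #B) :
    #A < ℓ := by
  by_contra! hA
  obtain ⟨A₁, hA₁, rfl⟩ := exists_subset_card_eq hA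
  obtain ⟨B₁, hB₁, hB₁card⟩ := exists_subset_card_eq hB
  exact hK ⟨A₁, B₁, hAB.mono hA₁ hB₁, rfl, hB₁card,
    fun a ha b hb => hadj a (hA₁ ha) b (hB₁ hb)⟩

end Graph

theorem stmt10_general {V : Type*} [DecidableEq V] (G : SimpleGraph V)
    [DecidableRel G.Adj] (t q ℓ : ℕ) (ht : 4 ≤ t) (hq : 1 ≤ q)
    (hG : CgeFree t G) (hK : ¬ ContainsKll G ℓ) (X Y : Finset V)
    (hX : q * t / 2 ≤ X.card)
    (hcol : ∃ c : V → Fin q, ∀ u ∈ X, ∀ v ∈ X, G.Adj u v → c u ≠ c v)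
    (hYind : ∀ u ∈ Y, ∀ v ∈ Y, ¬ G.Adj u v)
    (hXY : Disjoint X Y)
    (hY : ℓ * X.card ^ (q * t / 2) ≤ Y.card) :
    ∃ X' ⊆ X, ∃ Y' ⊆ Y,
      X.card < X'.card + ℓ ∧
      Y.card ≤ Y'.card * X.card ^ (q * t / 2) ∧
      ∀ x ∈ X', ∀ y ∈ Y', ¬ G.Adj x y := by
  obtain ⟨c, hc⟩ := hcol
  have hcount := card_neighborTraces_le ht hq hX hG c hc hYind
  obtain ⟨A, hA⟩ := exists_card_le_card_fiber_mul_card_image (fun y => {x ∈ X | G.Adj y x}) Y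
  set Y' := {y ∈ Y | {x ∈ X | G.Adj y x} = A}
  have hY'A : ∀ y ∈ Y', {x ∈ X | G.Adj y x} = A := fun y hy => (mem_filter.1 hy).2
  have hYY' : #Y ≤ #Y' * #X ^ (q * t / 2) := hA.trans (Nat.mul_le_mul_left _ hcount)
  have hX₀ : 0 < #X := by have := Nat.mul_le_mul hq ht; omega
  have hℓY' : ℓ ≤ #Y' := Nat.le_of_mul_le_mul_right (hY.trans hYY') (pow_pos hX₀ _)
  have hXA : #(X ∩ A) < ℓ := by
    refine card_lt_of_forall_adj_of_not_containsKll G hK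
      (hXY.mono inter_subset_left (filter_subset _ _)) (fun x hx y hy => ?_) hℓY'
    rw [← hY'A y hy] at hx
    exact ((mem_filter.1 (mem_inter.1 hx).2).2).symm
  refine ⟨X \ A, sdiff_subset, Y', filter_subset _ _, ?_, hYY', fun x hx y hy hxy => ?_⟩
  · have := card_inter_add_card_sdiff X A
    omega
  · rw [← hY'A y hy] at hx
    exact (mem_sdiff.1 hx).2 (mem_filter.2 ⟨(mem_sdiff.1 hx).1, hxy.symm⟩)

theorem stmt10 {V : Type*} [Fintype V] [DecidableEq V] (G : SimpleGraph V)
    [DecidableRel G.Adj] (t q ℓ : ℕ) (hteven : Even t) (ht : 4 ≤ t) (hq : 1 ≤ q)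
    (hℓ : 1 ≤ ℓ) (hG : CgeFree t G) (hK : ¬ ContainsKll G ℓ) (X Y : Finset V)
    (hX : q * t / 2 ≤ X.card)
    (hcol : ∃ c : V → Fin q, ∀ u ∈ X, ∀ v ∈ X, G.Adj u v → c u ≠ c v)
    (hYind : ∀ u ∈ Y, ∀ v ∈ Y, ¬ G.Adj u v)
    (hXY : Disjoint X Y)
    (hY : ℓ * X.card ^ (q * t / 2) ≤ Y.card) :
    ∃ X' ⊆ X, ∃ Y' ⊆ Y,
      X.card < X'.card + ℓ ∧
      Y.card ≤ Y'.card * X.card ^ (q * t / 2) ∧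
      ∀ x ∈ X', ∀ y ∈ Y', ¬ G.Adj x y :=
  stmt10_general G t q ℓ ht hq hG hK X Y hX hcol hYind hXY hY
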